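/- Let 0 < p < 1 and let W and R be matrices in 𝒲_p. Then W + R ∈ 𝒲_p and ‖W + R‖_{𝒲_p}^p ≤ ‖W‖_{𝒲_p}^p + ‖R‖_{𝒲_p}^p. -/

import Mathlib

open scoped BigOperators

/-- The `Ξ_p = ℓ^{2p♯}(ℓ^{2p})` norm of a matrix,
`‖X‖_{Ξ_p} = (∑_j (∑_k |x_{jk}|^{2p})^{1/(1-p)})^{(1-p)/(2p)}`. -/
noncomputable def xiNorm (p : ℝ) (X : ℕ → ℕ → ℂ) : ℝ :=
  (∑' j, (∑' k, ‖X j k‖ ^ (2 * p)) ^ (1 / (1 - p))) ^ ((1 - p) / (2 * p))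

/-- `X` has finite `Ξ_p`-norm: all the sums defining `xiNorm` converge. -/
def HasXiNorm (p : ℝ) (X : ℕ → ℕ → ℂ) : Prop :=
  (∀ j, Summable fun k => ‖X j k‖ ^ (2 * p)) ∧
    Summable fun j => (∑' k, ‖X j k‖ ^ (2 * p)) ^ (1 / (1 - p))

/-- The set of values `‖X‖_{Ξ_p} ‖Y‖_{Ξ_p}` over all factorizations `W = X Yᵗ`,
i.e. `w_{jk} = ∑_l x_{jl} y_{kl}`, with `X, Y` of finite `Ξ_p`-norm.
`W ∈ 𝒲_p` iff this set is nonempty, and `‖W‖_{𝒲_p}` is its infimum. -/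
noncomputable def wReprVals (p : ℝ) (W : ℕ → ℕ → ℂ) : Set ℝ :=
  {c | ∃ X Y : ℕ → ℕ → ℂ, HasXiNorm p X ∧ HasXiNorm p Y ∧
    (∀ j k, HasSum (fun l => X j l * Y k l) (W j k)) ∧
    c = xiNorm p X * xiNorm p Y}

/-!
Rescaling `X ↦ tX`, `Y ↦ t⁻¹Y` balances a factorization `W = XYᵗ` to `‖X‖ = ‖Y‖`, so that
`‖X‖^{2p} = (‖X‖‖Y‖)^p`. If `W = XYᵗ` and `R = UVᵗ`, interleaving the columns of `X` and `U`
into `Z`, and those of `Y` and `V` into `T`, gives `W + R = ZTᵗ`. The row sums of `|z_{jl}|^{2p}`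
are the sums of those of `X` and `U`, so Minkowski's inequality in `ℓ^{1/(1-p)}` yields
`‖Z‖^{2p} ≤ ‖X‖^{2p} + ‖U‖^{2p}`, and likewise for `T`; hence
`(‖Z‖‖T‖)^p ≤ (‖X‖‖Y‖)^p + (‖U‖‖V‖)^p`.
-/

lemma xiNorm_nonneg (p : ℝ) (X : ℕ → ℕ → ℂ) : 0 ≤ xiNorm p X := by
  unfold xiNorm; positivity

lemma xiNorm_rpow_two_mul {p : ℝ} (hp : p ≠ 0) (X : ℕ → ℕ → ℂ) :
    xiNorm p X ^ (2 * p) = (∑' j, (∑' k, ‖X j k‖ ^ (2 * p)) ^ (1 / (1 - p))) ^ (1 - p) := by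
  rw [xiNorm, ← Real.rpow_mul (by positivity)]
  congr 1
  field_simp

lemma HasXiNorm.eq_zero_of_xiNorm_eq_zero {p : ℝ} {X : ℕ → ℕ → ℂ} (hX : HasXiNorm p X)
    (h : xiNorm p X = 0) (j k : ℕ) : X j k = 0 := by
  have eq_zero_of_tsum {f : ℕ → ℝ} (hf : Summable f) (h0 : ∀ i, 0 ≤ f i) (hs : ∑' i, f i = 0)
      (i : ℕ) : f i = 0 :=
    le_antisymm (hs ▸ hf.le_tsum i fun i _ => h0 i) (h0 i)
  have hsum := ((Real.rpow_eq_zero_iff_of_nonneg (by positivity)).1 h).1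
  have hrow := ((Real.rpow_eq_zero_iff_of_nonneg (by positivity)).1
    (eq_zero_of_tsum hX.2 (fun _ => by positivity) hsum j)).1
  have hjk := eq_zero_of_tsum (hX.1 j) (fun _ => by positivity) hrow k
  exact norm_eq_zero.1 ((Real.rpow_eq_zero_iff_of_nonneg (norm_nonneg _)).1 hjk).1

lemma tsum_norm_const_mul_rpow (a : ℂ) (x : ℕ → ℂ) (q : ℝ) :
    ∑' k, ‖a * x k‖ ^ q = ‖a‖ ^ q * ∑' k, ‖x k‖ ^ q := by
  rw [← tsum_mul_left]
  congr with k
  rw [norm_mul, Real.mul_rpow (norm_nonneg _) (norm_nonneg _)]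

lemma HasXiNorm.const_mul {p : ℝ} {X : ℕ → ℕ → ℂ} (hX : HasXiNorm p X) (a : ℂ) :
    HasXiNorm p fun j k => a * X j k := by
  refine ⟨fun j => ((hX.1 j).mul_left (‖a‖ ^ (2 * p))).congr fun k => ?_,
    (hX.2.mul_left ((‖a‖ ^ (2 * p)) ^ (1 / (1 - p)))).congr fun j => ?_⟩
  · rw [norm_mul, Real.mul_rpow (norm_nonneg _) (norm_nonneg _)]
  · rw [tsum_norm_const_mul_rpow, Real.mul_rpow (by positivity) (by positivity)]

lemma xiNorm_const_mul {p : ℝ} (hp0 : p ≠ 0) (hp1 : p ≠ 1) (X : ℕ → ℕ → ℂ) (a : ℂ) :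
    xiNorm p (fun j k => a * X j k) = ‖a‖ * xiNorm p X := by
  have hrow (j : ℕ) : (∑' k, ‖a * X j k‖ ^ (2 * p)) ^ (1 / (1 - p)) =
      (‖a‖ ^ (2 * p)) ^ (1 / (1 - p)) * (∑' k, ‖X j k‖ ^ (2 * p)) ^ (1 / (1 - p)) := by
    rw [tsum_norm_const_mul_rpow, Real.mul_rpow (by positivity) (by positivity)]
  have hexp : 2 * p * (1 / (1 - p) * ((1 - p) / (2 * p))) = 1 := by
    field_simp [sub_ne_zero.2 hp1.symm]
  rw [xiNorm, xiNorm, tsum_congr hrow, tsum_mul_left, Real.mul_rpow (by positivity) (by positivity),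
    ← Real.rpow_mul (by positivity), ← Real.rpow_mul (norm_nonneg a), hexp, Real.rpow_one]

def interleave {α : Type*} (f g : ℕ → α) (n : ℕ) : α :=
  if n % 2 = 0 then f (n / 2) else g (n / 2)

section interleave

variable {α M : Type*} (f g : ℕ → α)

@[simp]
lemma interleave_two_mul (n : ℕ) : interleave f g (2 * n) = f n := by
  simp [interleave]

@[simp]
lemma interleave_two_mul_add_one (n : ℕ) : interleave f g (2 * n + 1) = g n := by
  have hdiv : (2 * n + 1) / 2 = n := by omega
  simp [interleave, hdiv]

lemma comp_interleave (φ : α → M) : φ ∘ interleave f g = interleave (φ ∘ f) (φ ∘ g) :=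
  funext fun _ => apply_ite φ _ _ _

lemma interleave_mul_interleave [Mul α] (f' g' : ℕ → α) :
    (fun n => interleave f g n * interleave f' g' n) = interleave (f * f') (g * g') := by
  funext n
  unfold interleave
  split_ifs <;> rfl

lemma HasSum.interleave [AddCommMonoid M] [TopologicalSpace M] [ContinuousAdd M] {f g : ℕ → M}
    {a b : M} (hf : HasSum f a) (hg : HasSum g b) : HasSum (interleave f g) (a + b) :=
  HasSum.even_add_odd (by simpa using hf) (by simpa using hg)

end interleave

lemma hasSum_norm_rpow_interleave {f g : ℕ → ℂ} {q : ℝ} (hf : Summable fun k => ‖f k‖ ^ q)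
    (hg : Summable fun k => ‖g k‖ ^ q) :
    HasSum (fun l => ‖interleave f g l‖ ^ q) (∑' k, ‖f k‖ ^ q + ∑' k, ‖g k‖ ^ q) := by
  rw [show (fun l => ‖interleave f g l‖ ^ q) = interleave (fun k => ‖f k‖ ^ q) (fun k => ‖g k‖ ^ q)
    from comp_interleave f g fun z => ‖z‖ ^ q]
  exact hf.hasSum.interleave hg.hasSum

section interleave_xiNorm

variable {p : ℝ} {X U : ℕ → ℕ → ℂ}

lemma HasXiNorm.interleave (hp0 : 0 ≤ p) (hp1 : p < 1) (hX : HasXiNorm p X)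
    (hU : HasXiNorm p U) : HasXiNorm p fun j => interleave (X j) (U j) := by
  have hrow (j : ℕ) := hasSum_norm_rpow_interleave (hX.1 j) (hU.1 j)
  refine ⟨fun j => (hrow j).summable, ?_⟩
  refine (Real.Lp_add_le_tsum_of_nonneg (one_le_one_div (sub_pos.2 hp1) (by linarith))
    (fun _ => by positivity) (fun _ => by positivity) hX.2 hU.2).1.congr fun j => ?_
  rw [(hrow j).tsum_eq]

lemma xiNorm_interleave_rpow_le (hp0 : 0 < p) (hp1 : p < 1) (hX : HasXiNorm p X)
    (hU : HasXiNorm p U) :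
    xiNorm p (fun j => interleave (X j) (U j)) ^ (2 * p) ≤
      xiNorm p X ^ (2 * p) + xiNorm p U ^ (2 * p) := by
  have hrow (j : ℕ) := (hasSum_norm_rpow_interleave (hX.1 j) (hU.1 j)).tsum_eq
  have minkowski := Real.Lp_add_le_tsum_of_nonneg' (one_le_one_div (sub_pos.2 hp1) (by linarith))
    (fun _ => by positivity) (fun _ => by positivity) hX.2 hU.2
  rw [one_div_one_div] at minkowski
  simpa only [xiNorm_rpow_two_mul hp0.ne', hrow] using minkowski

end interleave_xiNorm

lemma nonneg_of_mem_wReprVals {p : ℝ} {W : ℕ → ℕ → ℂ} : ∀ c ∈ wReprVals p W, 0 ≤ c := by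
  rintro _ ⟨X, Y, -, -, -, rfl⟩
  exact mul_nonneg (xiNorm_nonneg p X) (xiNorm_nonneg p Y)

lemma exists_balanced_of_mem_wReprVals {p c : ℝ} (hp0 : p ≠ 0) (hp1 : p ≠ 1)
    {W : ℕ → ℕ → ℂ} (hc : c ∈ wReprVals p W) :
    ∃ X Y : ℕ → ℕ → ℂ, HasXiNorm p X ∧ HasXiNorm p Y ∧
      (∀ j k, HasSum (fun l => X j l * Y k l) (W j k)) ∧
      xiNorm p X = xiNorm p Y ∧ c = xiNorm p X * xiNorm p Y := by
  obtain ⟨X, Y, hX, hY, hXY, rfl⟩ := hc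
  by_cases h0 : xiNorm p X = 0 ∨ xiNorm p Y = 0
  · have hXY0 (j k l : ℕ) : X j l * Y k l = 0 := by
      rcases h0 with h | h
      · rw [hX.eq_zero_of_xiNorm_eq_zero h, zero_mul]
      · rw [hY.eq_zero_of_xiNorm_eq_zero h, mul_zero]
    refine ⟨fun j k => 0 * X j k, fun j k => 0 * Y j k, hX.const_mul 0, hY.const_mul 0,
      fun j k => by simpa [hXY0] using hXY j k, ?_, ?_⟩ <;>
    rw [xiNorm_const_mul hp0 hp1, xiNorm_const_mul hp0 hp1, norm_zero, zero_mul, zero_mul]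
    rcases h0 with h | h <;> simp [h]
  · push Not at h0
    have hA : 0 < xiNorm p X := (xiNorm_nonneg p X).lt_of_ne' h0.1
    have hB : 0 < xiNorm p Y := (xiNorm_nonneg p Y).lt_of_ne' h0.2
    obtain ⟨t, ht, htt⟩ : ∃ t : ℝ, 0 < t ∧ t * t * xiNorm p X = xiNorm p Y := by
      refine ⟨√(xiNorm p Y) / √(xiNorm p X), by positivity, ?_⟩
      rw [div_mul_div_comm, Real.mul_self_sqrt hA.le, Real.mul_self_sqrt hB.le]
      field_simp
    refine ⟨fun j k => (t : ℂ) * X j k, fun j k => ((t⁻¹ : ℝ) : ℂ) * Y j k, hX.const_mul _,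
      hY.const_mul _, fun j k => ?_, ?_, ?_⟩
    · convert hXY j k using 2 with l
      have htC : (t : ℂ) ≠ 0 := by exact_mod_cast ht.ne'
      push_cast
      field_simp
    all_goals
      rw [xiNorm_const_mul hp0 hp1, xiNorm_const_mul hp0 hp1, Complex.norm_real, Complex.norm_real,
        Real.norm_of_nonneg ht.le, Real.norm_of_nonneg (inv_nonneg.2 ht.le)]
    · rw [← htt]
      field_simp
    · field_simp

lemma mul_self_rpow {x : ℝ} (hx : 0 ≤ x) (p : ℝ) : (x * x) ^ p = x ^ (2 * p) := by
  rw [← sq, ← Real.rpow_natCast_mul hx]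
  norm_num

lemma rpow_mul_le_of_rpow_two_mul_le {x y M p : ℝ} (hx : 0 ≤ x) (hy : 0 ≤ y)
    (hxM : x ^ (2 * p) ≤ M) (hyM : y ^ (2 * p) ≤ M) : (x * y) ^ p ≤ M := by
  have hsq {z : ℝ} (hz : 0 ≤ z) : z ^ (2 * p) = (z ^ p) ^ 2 := by
    rw [mul_comm, ← Real.rpow_mul_natCast hz]
    norm_num
  rw [hsq hx] at hxM
  rw [hsq hy] at hyM
  rw [Real.mul_rpow hx hy]
  nlinarith [sq_nonneg (x ^ p - y ^ p)]

lemma exists_mem_wReprVals_add_rpow_le {p c d : ℝ} (hp0 : 0 < p) (hp1 : p < 1)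
    {W R : ℕ → ℕ → ℂ} (hc : c ∈ wReprVals p W) (hd : d ∈ wReprVals p R) :
    ∃ e ∈ wReprVals p (fun j k => W j k + R j k), e ^ p ≤ c ^ p + d ^ p := by
  obtain ⟨X, Y, hX, hY, hXY, hXY_eq, rfl⟩ := exists_balanced_of_mem_wReprVals hp0.ne' hp1.ne hc
  obtain ⟨U, V, hU, hV, hUV, hUV_eq, rfl⟩ := exists_balanced_of_mem_wReprVals hp0.ne' hp1.ne hd
  rw [← hXY_eq, ← hUV_eq, mul_self_rpow (xiNorm_nonneg p X), mul_self_rpow (xiNorm_nonneg p U)]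
  refine ⟨_, ⟨_, _, hX.interleave hp0.le hp1 hU, hY.interleave hp0.le hp1 hV, fun j k => ?_, rfl⟩,
    rpow_mul_le_of_rpow_two_mul_le (xiNorm_nonneg _ _) (xiNorm_nonneg _ _)
      (xiNorm_interleave_rpow_le hp0 hp1 hX hU) ?_⟩
  · rw [interleave_mul_interleave]
    exact (hXY j k).interleave (hUV j k)
  · rw [hXY_eq, hUV_eq]
    exact xiNorm_interleave_rpow_le hp0 hp1 hY hV

lemma rpow_csInf {S : Set ℝ} {p : ℝ} (hp : 0 ≤ p) (hS : S.Nonempty) (hS0 : ∀ x ∈ S, 0 ≤ x) :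
    sInf S ^ p = sInf ((· ^ p) '' S) :=
  MonotoneOn.map_csInf_of_continuousWithinAt
    (Real.continuousAt_rpow_const _ _ (Or.inr hp)).continuousWithinAt
    (fun _ hx _ _ hxy => Real.rpow_le_rpow (hS0 _ hx) hxy hp) hS ⟨0, hS0⟩

lemma bddBelow_rpow_image {S : Set ℝ} (p : ℝ) (hS0 : ∀ x ∈ S, 0 ≤ x) :
    BddBelow ((· ^ p) '' S) :=
  ⟨0, Set.forall_mem_image.2 fun x hx => Real.rpow_nonneg (hS0 x hx) p⟩

theorem stmt11 (p : ℝ) (hp0 : 0 < p) (hp1 : p < 1)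
    (W R : ℕ → ℕ → ℂ)
    (hW : (wReprVals p W).Nonempty) (hR : (wReprVals p R).Nonempty) :
    (wReprVals p fun j k => W j k + R j k).Nonempty ∧
      sInf (wReprVals p fun j k => W j k + R j k) ^ p ≤
        sInf (wReprVals p W) ^ p + sInf (wReprVals p R) ^ p := by
  obtain ⟨e, he, -⟩ := exists_mem_wReprVals_add_rpow_le hp0 hp1 hW.some_mem hR.some_mem
  refine ⟨⟨e, he⟩, ?_⟩
  rw [rpow_csInf hp0.le ⟨e, he⟩ nonneg_of_mem_wReprVals,
    rpow_csInf hp0.le hW nonneg_of_mem_wReprVals, rpow_csInf hp0.le hR nonneg_of_mem_wReprVals,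
    ← csInf_add (hW.image _) (bddBelow_rpow_image p nonneg_of_mem_wReprVals)
      (hR.image _) (bddBelow_rpow_image p nonneg_of_mem_wReprVals)]
  refine le_csInf ((hW.image _).add (hR.image _)) ?_
  rintro _ ⟨_, ⟨c, hc, rfl⟩, _, ⟨d, hd, rfl⟩, rfl⟩
  obtain ⟨e, he, hle⟩ := exists_mem_wReprVals_add_rpow_le hp0 hp1 hc hd
  exact (csInf_le (bddBelow_rpow_image p nonneg_of_mem_wReprVals) ⟨e, he, rfl⟩).trans hle
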